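/- Let A = [a_{ij}]_{i∈I, j∈J} be a nonnegative matrix with |I|, |J| ≥ 2 having Γ-shaped support with dominant corner (i1, j1), let β = max_{k∈I, k≠i1} a_{k j1}, and let A1, A2 be the nonnegative matrices on I × J defined by A1_{i1 j1} = a_{i1 j1} − β, A1_{i1 l} = a_{i1 l} for l ≠ j1, A1_{kl} = 0 for k ≠ i1; and A2_{k j1} = a_{k j1} for k ≠ i1, A2_{i1 j1} = β, A2_{kl} = 0 for l ≠ j1. Then the core of w_A is the Minkowski sum of the cores of w_{A1} and w_{A2}: C(w_A) = C(w_{A1}) + C(w_{A2}). -/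
import Mathlib


open Finset

/-- A population monotonic allocation scheme (PMAS) for the TU game `w` on the
finite player set `α`: subgame efficiency on every nonempty coalition, and
individual payoff monotonicity along coalition inclusion. -/
def IsPMAS {α : Type*} [Fintype α] (w : Finset α → ℝ) (x : Finset α → α → ℝ) : Prop :=
  (∀ S : Finset α, S.Nonempty → ∑ i ∈ S, x S i = w S) ∧
  (∀ S T : Finset α, S ⊆ T → ∀ i ∈ S, x S i ≤ x T i)

/-- `μ` is a matching inside coalition `S`: every pair uses players of `S`,
and each player appears in at most one pair. -/
def IsMatching {I J : Type*} (S : Finset (I ⊕ J)) (μ : Finset (I × J)) : Prop :=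
  (∀ p ∈ μ, Sum.inl p.1 ∈ S ∧ Sum.inr p.2 ∈ S) ∧
  (∀ p ∈ μ, ∀ q ∈ μ, p.1 = q.1 → p = q) ∧
  (∀ p ∈ μ, ∀ q ∈ μ, p.2 = q.2 → p = q)

/-- The assignment game induced by the matrix `A`. -/
noncomputable def assignGame {I J : Type*} [Fintype I] [Fintype J]
    (A : I → J → ℝ) (S : Finset (I ⊕ J)) : ℝ :=
  sSup ((fun μ : Finset (I × J) => ∑ p ∈ μ, A p.1 p.2) '' {μ | IsMatching S μ})

/-- `x` is a core allocation of the game `w`. -/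
def InCore {α : Type*} [Fintype α] (w : Finset α → ℝ) (x : α → ℝ) : Prop :=
  (∑ i, x i) = w Finset.univ ∧ ∀ S : Finset α, w S ≤ ∑ i ∈ S, x i

/-- `x` is PMAS-extendable in the game `w`. -/
def PMASExtendable {α : Type*} [Fintype α] (w : Finset α → ℝ) (x : α → ℝ) : Prop :=
  ∃ y, IsPMAS w y ∧ ∀ i, y Finset.univ i = x i

/-- The upper (utopia) vector. -/
noncomputable def upperVec {α : Type*} [Fintype α] [DecidableEq α]
    (v : Finset α → ℝ) (i : α) : ℝ :=
  v Finset.univ - v (Finset.univ.erase i)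

/-- The lower (minimal right) vector. -/
noncomputable def lowerVec {α : Type*} [Fintype α] [DecidableEq α]
    (v : Finset α → ℝ) (i : α) : ℝ :=
  sSup {t | ∃ S : Finset α, i ∈ S ∧ t = v S - ∑ j ∈ S.erase i, upperVec v j}

/-- `τ` is a tau-value of the game `v`. -/
def IsTauValue {α : Type*} [Fintype α] [DecidableEq α] (v : Finset α → ℝ) (τ : α → ℝ) : Prop :=
  ∃ κ : ℝ, 0 ≤ κ ∧ κ ≤ 1 ∧ (∀ i, τ i = κ * upperVec v i + (1 - κ) * lowerVec v i) ∧
    ∑ i, τ i = v Finset.univ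

open scoped Classical in
/-- The nondecreasingly ordered list of satisfactions of the nonempty proper
coalitions at allocation `x`. -/
noncomputable def satList {α : Type*} [Fintype α] (v : Finset α → ℝ) (x : α → ℝ) : List ℝ :=
  ((Finset.univ.filter (fun S : Finset α => S.Nonempty ∧ S ≠ Finset.univ)).val.map
    (fun S => ∑ i ∈ S, x i - v S)).sort (· ≤ ·)

/-- `x` is the nucleolus of `v`: a core allocation lexicographically maximizing
the nondecreasingly ordered satisfaction vector over the core. -/
noncomputable def IsNucleolus {α : Type*} [Fintype α] (v : Finset α → ℝ) (x : α → ℝ) : Prop :=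
  InCore v x ∧ ∀ y, InCore v y →
    satList v y = satList v x ∨ List.Lex (· < ·) (satList v y) (satList v x)

/-- `A` has Γ-shaped support with corner `(i1, j1)`. -/
def GammaShaped {I J : Type*} (A : I → J → ℝ) (i1 : I) (j1 : J) : Prop :=
  (∀ k l, (k = i1 ∨ l = j1) → 0 < A k l) ∧ (∀ k l, k ≠ i1 → l ≠ j1 → A k l = 0)

/-- The corner `(i1, j1)` of `A` is dominant. -/
def DominantCorner {I J : Type*} (A : I → J → ℝ) (i1 : I) (j1 : J) : Prop :=
  ∀ k l, k ≠ i1 → l ≠ j1 → A i1 l + A k j1 ≤ A i1 j1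

section AuxCore
set_option linter.unusedSectionVars false
variable {I J : Type*} [Fintype I] [Fintype J]

lemma empty_isMatching (S : Finset (I ⊕ J)) : IsMatching S (∅ : Finset (I × J)) := by
  refine ⟨?_, ?_, ?_⟩ <;> intro p hp <;> simp at hp

lemma sum_le_assignGame {A : I → J → ℝ} {S : Finset (I ⊕ J)} {μ : Finset (I × J)}
    (h : IsMatching S μ) : ∑ p ∈ μ, A p.1 p.2 ≤ assignGame A S := by
  apply le_csSup
  · exact ((Set.toFinite {μ : Finset (I × J) | IsMatching S μ}).image _).bddAbove
  · exact ⟨μ, h, rfl⟩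

lemma assignGame_nonneg (A : I → J → ℝ) (S : Finset (I ⊕ J)) : 0 ≤ assignGame A S := by
  simpa using sum_le_assignGame (A := A) (empty_isMatching S)

lemma assignGame_le {A : I → J → ℝ} {S : Finset (I ⊕ J)} {c : ℝ}
    (h : ∀ μ, IsMatching S μ → ∑ p ∈ μ, A p.1 p.2 ≤ c) : assignGame A S ≤ c := by
  refine csSup_le ⟨0, ∅, ?_, by simp⟩ ?_
  · exact empty_isMatching S
  · rintro x ⟨μ, hμ, rfl⟩
    exact h μ hμ

lemma matching_sum_le [DecidableEq I] [DecidableEq J] {A : I → J → ℝ} {x : I ⊕ J → ℝ}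
    (hx0 : ∀ t, 0 ≤ x t) (hxp : ∀ i j, A i j ≤ x (Sum.inl i) + x (Sum.inr j))
    {S : Finset (I ⊕ J)} {μ : Finset (I × J)} (h : IsMatching S μ) :
    ∑ p ∈ μ, A p.1 p.2 ≤ ∑ t ∈ S, x t := by
  obtain ⟨hmem, hfst, hsnd⟩ := h
  have h1 : ∑ p ∈ μ, A p.1 p.2 ≤ ∑ p ∈ μ, (x (Sum.inl p.1) + x (Sum.inr p.2)) :=
    Finset.sum_le_sum fun p _ => hxp p.1 p.2
  have hdisj : Disjoint (μ.image (fun p => (Sum.inl p.1 : I ⊕ J)))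
      (μ.image (fun p => (Sum.inr p.2 : I ⊕ J))) := by
    refine Finset.disjoint_left.2 ?_
    intro a ha hb
    simp only [Finset.mem_image] at ha hb
    obtain ⟨p, _, rfl⟩ := ha
    obtain ⟨q, _, h⟩ := hb
    exact absurd h (by simp)
  have h2 : ∑ p ∈ μ, (x (Sum.inl p.1) + x (Sum.inr p.2))
      = ∑ t ∈ μ.image (fun p => (Sum.inl p.1 : I ⊕ J)) ∪ μ.image (fun p => (Sum.inr p.2 : I ⊕ J)), x t := by
    rw [Finset.sum_union hdisj, Finset.sum_add_distrib]
    congr 1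
    · exact (Finset.sum_image (fun p hp q hq hpq => hfst p hp q hq (Sum.inl.inj hpq))).symm
    · exact (Finset.sum_image (fun p hp q hq hpq => hsnd p hp q hq (Sum.inr.inj hpq))).symm
  have h3 : μ.image (fun p => (Sum.inl p.1 : I ⊕ J)) ∪ μ.image (fun p => (Sum.inr p.2 : I ⊕ J)) ⊆ S := by
    intro t ht
    simp only [Finset.mem_union, Finset.mem_image] at ht
    rcases ht with ⟨p, hp, rfl⟩ | ⟨p, hp, rfl⟩
    · exact (hmem p hp).1
    · exact (hmem p hp).2
  calc ∑ p ∈ μ, A p.1 p.2 ≤ _ := h1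
    _ = _ := h2
    _ ≤ ∑ t ∈ S, x t := Finset.sum_le_sum_of_subset_of_nonneg h3 (fun t _ _ => hx0 t)

lemma assignGame_le_sum [DecidableEq I] [DecidableEq J] {A : I → J → ℝ} {x : I ⊕ J → ℝ}
    (hx0 : ∀ t, 0 ≤ x t) (hxp : ∀ i j, A i j ≤ x (Sum.inl i) + x (Sum.inr j))
    (S : Finset (I ⊕ J)) : assignGame A S ≤ ∑ t ∈ S, x t :=
  assignGame_le fun _ h => matching_sum_le hx0 hxp h

lemma pair_le_assignGame {A : I → J → ℝ} (i : I) (j : J) {S : Finset (I ⊕ J)}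
    (hi : Sum.inl i ∈ S) (hj : Sum.inr j ∈ S) : A i j ≤ assignGame A S := by
  have hm : IsMatching S {(i, j)} := by
    refine ⟨?_, ?_, ?_⟩
    · intro p hp; simp only [Finset.mem_singleton] at hp; subst hp; exact ⟨hi, hj⟩
    · intro p hp q hq _; simp only [Finset.mem_singleton] at hp hq; rw [hp, hq]
    · intro p hp q hq _; simp only [Finset.mem_singleton] at hp hq; rw [hp, hq]
  simpa using sum_le_assignGame hm

lemma inCore_assignGame_iff [DecidableEq I] [DecidableEq J] {A : I → J → ℝ} {x : I ⊕ J → ℝ} :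
    InCore (assignGame A) x ↔
      (∑ t, x t) = assignGame A Finset.univ ∧ (∀ t, 0 ≤ x t) ∧
      (∀ i j, A i j ≤ x (Sum.inl i) + x (Sum.inr j)) := by
  constructor
  · rintro ⟨heff, hS⟩
    refine ⟨heff, ?_, ?_⟩
    · intro t
      have h1 := hS {t}
      have h0 := assignGame_nonneg A {t}
      simpa using h0.trans h1
    · intro i j
      have h1 := hS {Sum.inl i, Sum.inr j}
      have hp := pair_le_assignGame (A := A) i j (S := {Sum.inl i, Sum.inr j}) (by simp) (by simp)
      have hsum : ∑ t ∈ ({Sum.inl i, Sum.inr j} : Finset (I ⊕ J)), x t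
          = x (Sum.inl i) + x (Sum.inr j) := Finset.sum_pair (by simp)
      linarith [hp.trans h1]
  · rintro ⟨heff, hx0, hxp⟩
    exact ⟨heff, fun S => assignGame_le_sum hx0 hxp S⟩

def twoVec [DecidableEq I] [DecidableEq J] (i1 : I) (j1 : J) (a b : ℝ) : I ⊕ J → ℝ :=
  Sum.elim (fun i => if i = i1 then a else 0) (fun j => if j = j1 then b else 0)

lemma sum_twoVec [DecidableEq I] [DecidableEq J] (i1 : I) (j1 : J) (a b : ℝ) :
    ∑ t, twoVec i1 j1 a b t = a + b := by
  simp [twoVec, Fintype.sum_sum_type, Finset.sum_ite_eq']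

lemma concentrate [DecidableEq I] [DecidableEq J] {x : I ⊕ J → ℝ} {i1 : I} {j1 : J} {s : ℝ}
    (hx0 : ∀ t, 0 ≤ x t) (htot : ∑ t, x t = s)
    (hge : s ≤ x (Sum.inl i1) + x (Sum.inr j1)) :
    (∀ i, i ≠ i1 → x (Sum.inl i) = 0) ∧ (∀ j, j ≠ j1 → x (Sum.inr j) = 0) ∧
    x (Sum.inl i1) + x (Sum.inr j1) = s := by
  rw [Fintype.sum_sum_type] at htot
  have e1 : ∑ i, x (Sum.inl i)
      = x (Sum.inl i1) + ∑ i ∈ Finset.univ.erase i1, x (Sum.inl i) :=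
    (Finset.add_sum_erase _ _ (Finset.mem_univ i1)).symm
  have e2 : ∑ j, x (Sum.inr j)
      = x (Sum.inr j1) + ∑ j ∈ Finset.univ.erase j1, x (Sum.inr j) :=
    (Finset.add_sum_erase _ _ (Finset.mem_univ j1)).symm
  have hR1 : 0 ≤ ∑ i ∈ Finset.univ.erase i1, x (Sum.inl i) :=
    Finset.sum_nonneg fun i _ => hx0 _
  have hR2 : 0 ≤ ∑ j ∈ Finset.univ.erase j1, x (Sum.inr j) :=
    Finset.sum_nonneg fun j _ => hx0 _
  rw [e1, e2] at htot
  have hZ1 : ∑ i ∈ Finset.univ.erase i1, x (Sum.inl i) = 0 := by linarith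
  have hZ2 : ∑ j ∈ Finset.univ.erase j1, x (Sum.inr j) = 0 := by linarith
  refine ⟨?_, ?_, by linarith⟩
  · intro i hi
    exact (Finset.sum_eq_zero_iff_of_nonneg fun i _ => hx0 _).1 hZ1 i
      (Finset.mem_erase.2 ⟨hi, Finset.mem_univ i⟩)
  · intro j hj
    exact (Finset.sum_eq_zero_iff_of_nonneg fun j _ => hx0 _).1 hZ2 j
      (Finset.mem_erase.2 ⟨hj, Finset.mem_univ j⟩)

end AuxCore

open Pointwise in
/-- For an assignment game with Γ-shaped support and dominant
corner, the core is the Minkowski sum of the cores of the single-positive-row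
and single-positive-column summand assignment games. -/
theorem assignGame_gamma_dominant_core_sum {I J : Type*} [Fintype I] [Fintype J]
    [DecidableEq I] [DecidableEq J]
    (h2I : 2 ≤ Fintype.card I) (h2J : 2 ≤ Fintype.card J)
    (A : I → J → ℝ) (hA : ∀ i j, 0 ≤ A i j)
    (i1 : I) (j1 : J) (hG : GammaShaped A i1 j1) (hdom : DominantCorner A i1 j1)
    (β : ℝ) (hβmem : ∃ k, k ≠ i1 ∧ A k j1 = β) (hβub : ∀ k, k ≠ i1 → A k j1 ≤ β) :
    {x : I ⊕ J → ℝ | InCore (assignGame A) x} =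
      {x : I ⊕ J → ℝ | InCore (assignGame
          (fun k l => if k = i1 then (if l = j1 then A i1 j1 - β else A i1 l) else 0)) x} +
      {x : I ⊕ J → ℝ | InCore (assignGame
          (fun k l => if l = j1 then (if k = i1 then β else A k j1) else 0)) x} := by
    classical
  obtain ⟨k0, hk0, hβk0⟩ := hβmem
  obtain ⟨l0, hl0⟩ := Fintype.exists_ne_of_one_lt_card (by omega) j1
  set c := A i1 j1 with hc
  set A1 : I → J → ℝ := fun k l => if k = i1 then (if l = j1 then A i1 j1 - β else A i1 l) else 0 with hA1
  set A2 : I → J → ℝ := fun k l => if l = j1 then (if k = i1 then β else A k j1) else 0 with hA2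
  have hβ0 : 0 < β := hβk0 ▸ hG.1 k0 j1 (Or.inr rfl)
  have hdomβ : ∀ l, l ≠ j1 → A i1 l + β ≤ c := fun l hl => hβk0 ▸ hdom k0 l hk0 hl
  have hαl0 : (0:ℝ) ≤ A i1 l0 := hA i1 l0
  -- nonnegativity and pair constraints for the key allocations
  have hnn : ∀ a b : ℝ, 0 ≤ a → 0 ≤ b → ∀ t, 0 ≤ twoVec i1 j1 a b t := by
    intro a b ha hb t
    rcases t with i | j
    · simp only [twoVec, Sum.elim_inl]; split_ifs; exacts [ha, le_rfl]
    · simp only [twoVec, Sum.elim_inr]; split_ifs; exacts [hb, le_rfl]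
  -- pair constraints for A with twoVec u (c - u)
  have hpA : ∀ u : ℝ, (∀ l, l ≠ j1 → A i1 l ≤ u) → u ≤ c - β →
      ∀ i j, A i j ≤ twoVec i1 j1 u (c - u) (Sum.inl i) + twoVec i1 j1 u (c - u) (Sum.inr j) := by
    intro u hu hub i j
    simp only [twoVec, Sum.elim_inl, Sum.elim_inr]
    by_cases hi : i = i1 <;> by_cases hj : j = j1
    · subst hi; subst hj; rw [if_pos rfl, if_pos rfl, ← hc]; linarith
    · subst hi; rw [if_pos rfl, if_neg hj]; linarith [hu j hj]
    · subst hj; rw [if_neg hi, if_pos rfl]; linarith [hβub i hi]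
    · rw [if_neg hi, if_neg hj, hG.2 i j hi hj]; norm_num
  have hu0 : ∀ u : ℝ, (∀ l, l ≠ j1 → A i1 l ≤ u) → 0 ≤ u := fun u hu => hαl0.trans (hu l0 hl0)
  have hcb : ∀ l, l ≠ j1 → A i1 l ≤ c - β := fun l hl => by linarith [hdomβ l hl]
  -- value of the grand coalition for A
  have wA : assignGame A Finset.univ = c := by
    refine le_antisymm ?_ (pair_le_assignGame i1 j1 (Finset.mem_univ _) (Finset.mem_univ _))
    have h := assignGame_le_sum (A := A)
      (hnn (c - β) (c - (c - β)) (by linarith [hu0 _ hcb]) (by linarith) )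
      (hpA (c - β) hcb le_rfl) Finset.univ
    rw [sum_twoVec] at h
    linarith
  -- core of A
  have memA : ∀ x : I ⊕ J → ℝ, InCore (assignGame A) x ↔
      ∃ u, (∀ l, l ≠ j1 → A i1 l ≤ u) ∧ u ≤ c - β ∧ x = twoVec i1 j1 u (c - u) := by
    intro x
    rw [inCore_assignGame_iff]
    constructor
    · rintro ⟨heff, h0, hp⟩
      obtain ⟨hz1, hz2, hsum⟩ := concentrate h0 (heff.trans wA) (hc ▸ hp i1 j1)
      refine ⟨x (Sum.inl i1), ?_, ?_, ?_⟩
      · intro l hl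
        have := hp i1 l
        rw [hz2 l hl] at this
        linarith
      · have := hp k0 j1
        rw [hz1 k0 hk0, hβk0] at this
        linarith
      · funext t
        rcases t with i | j
        · by_cases hi : i = i1
          · subst hi; simp [twoVec]
          · rw [hz1 i hi]; simp [twoVec, hi]
        · by_cases hj : j = j1
          · subst hj; simp only [twoVec, Sum.elim_inr, if_pos rfl, if_true]; linarith
          · rw [hz2 j hj]; simp [twoVec, hj]
    · rintro ⟨u, hu, hub, rfl⟩
      refine ⟨?_, hnn u (c - u) (hu0 u hu) (by linarith) , hpA u hu hub⟩
      rw [sum_twoVec, wA]; ring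
  -- pair constraints for A1 with twoVec u (c - β - u)
  have hpA1 : ∀ u : ℝ, (∀ l, l ≠ j1 → A i1 l ≤ u) → u ≤ c - β →
      ∀ i j, A1 i j ≤ twoVec i1 j1 u (c - β - u) (Sum.inl i) + twoVec i1 j1 u (c - β - u) (Sum.inr j) := by
    intro u hu hub i j
    by_cases hi : i = i1
    · simp only [twoVec, Sum.elim_inl, Sum.elim_inr, hA1, hi, if_pos rfl, if_true]
      by_cases hj : j = j1
      · rw [if_pos hj, if_pos hj, ← hc]; linarith
      · rw [if_neg hj, if_neg hj]; linarith [hu j hj]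
    · have : A1 i j = 0 := by simp [hA1, hi]
      rw [this]
      exact add_nonneg (hnn u (c - β - u) (hu0 u hu) (by linarith) _)
        (hnn u (c - β - u) (hu0 u hu) (by linarith) _)
  have hA1corner : A1 i1 j1 = c - β := by simp [hA1, ← hc]
  have wA1 : assignGame A1 Finset.univ = c - β := by
    refine le_antisymm ?_ ?_
    · have h := assignGame_le_sum (A := A1)
        (hnn (c - β) (c - β - (c - β)) (by linarith [hu0 _ hcb]) (by linarith))
        (hpA1 (c - β) hcb le_rfl) Finset.univ
      rw [sum_twoVec] at h
      linarith
    · rw [← hA1corner]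
      exact pair_le_assignGame i1 j1 (Finset.mem_univ _) (Finset.mem_univ _)
  have memA1 : ∀ x : I ⊕ J → ℝ, InCore (assignGame A1) x ↔
      ∃ u, (∀ l, l ≠ j1 → A i1 l ≤ u) ∧ u ≤ c - β ∧ x = twoVec i1 j1 u (c - β - u) := by
    intro x
    rw [inCore_assignGame_iff]
    constructor
    · rintro ⟨heff, h0, hp⟩
      obtain ⟨hz1, hz2, hsum⟩ := concentrate h0 (heff.trans wA1) (hA1corner ▸ hp i1 j1)
      refine ⟨x (Sum.inl i1), ?_, ?_, ?_⟩
      · intro l hl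
        have := hp i1 l
        rw [hz2 l hl] at this
        simp only [hA1, if_pos rfl, if_neg hl] at this
        linarith
      · have := h0 (Sum.inr j1)
        linarith
      · funext t
        rcases t with i | j
        · by_cases hi : i = i1
          · subst hi; simp [twoVec]
          · rw [hz1 i hi]; simp [twoVec, hi]
        · by_cases hj : j = j1
          · subst hj; simp only [twoVec, Sum.elim_inr, if_pos rfl, if_true]; linarith
          · rw [hz2 j hj]; simp [twoVec, hj]
    · rintro ⟨u, hu, hub, rfl⟩
      refine ⟨?_, hnn u (c - β - u) (hu0 u hu) (by linarith), hpA1 u hu hub⟩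
      rw [sum_twoVec, wA1]; ring
  -- A2 side
  have hpA2 : ∀ i j, A2 i j ≤ twoVec i1 j1 0 β (Sum.inl i) + twoVec i1 j1 0 β (Sum.inr j) := by
    intro i j
    simp only [twoVec, Sum.elim_inl, Sum.elim_inr, hA2]
    by_cases hj : j = j1
    · rw [if_pos hj, if_pos hj]
      by_cases hi : i = i1
      · rw [if_pos hi, if_pos hi]; linarith
      · rw [if_neg hi, if_neg hi]; linarith [hβub i hi]
    · rw [if_neg hj, if_neg hj]
      split_ifs <;> norm_num
  have hA2corner : A2 i1 j1 = β := by simp [hA2]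
  have wA2 : assignGame A2 Finset.univ = β := by
    refine le_antisymm ?_ ?_
    · have h := assignGame_le_sum (A := A2) (hnn 0 β le_rfl hβ0.le) hpA2 Finset.univ
      rw [sum_twoVec] at h
      linarith
    · rw [← hA2corner]
      exact pair_le_assignGame i1 j1 (Finset.mem_univ _) (Finset.mem_univ _)
  have memA2 : ∀ x : I ⊕ J → ℝ, InCore (assignGame A2) x ↔ x = twoVec i1 j1 0 β := by
    intro x
    rw [inCore_assignGame_iff]
    constructor
    · rintro ⟨heff, h0, hp⟩
      obtain ⟨hz1, hz2, hsum⟩ := concentrate h0 (heff.trans wA2) (hA2corner ▸ hp i1 j1)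
      have hk0' := hp k0 j1
      rw [hz1 k0 hk0] at hk0'
      simp only [hA2, if_pos rfl, if_neg hk0, hβk0] at hk0'
      have hxi1 : x (Sum.inl i1) = 0 := by linarith [h0 (Sum.inl i1)]
      funext t
      rcases t with i | j
      · by_cases hi : i = i1
        · subst hi; rw [hxi1]; simp [twoVec]
        · rw [hz1 i hi]; simp [twoVec, hi]
      · by_cases hj : j = j1
        · subst hj; simp only [twoVec, Sum.elim_inr, if_pos rfl, if_true]; linarith
        · rw [hz2 j hj]; simp [twoVec, hj]
    · rintro rfl
      refine ⟨?_, hnn 0 β le_rfl hβ0.le, hpA2⟩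
      rw [sum_twoVec, wA2]; ring
  have hadd : ∀ u : ℝ, twoVec i1 j1 u (c - β - u) + twoVec i1 j1 0 β = twoVec i1 j1 u (c - u) := by
    intro u
    funext t
    rcases t with i | j <;>
      simp only [Pi.add_apply, twoVec, Sum.elim_inl, Sum.elim_inr] <;>
      split_ifs <;> ring
  ext x
  simp only [Set.mem_setOf_eq, Set.mem_add]
  constructor
  · intro hx
    obtain ⟨u, h1, h2, rfl⟩ := (memA _).1 hx
    exact ⟨_, (memA1 _).2 ⟨u, h1, h2, rfl⟩, _, (memA2 _).2 rfl, hadd u⟩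
  · rintro ⟨y, hy, z, hz, rfl⟩
    obtain ⟨u, h1, h2, rfl⟩ := (memA1 _).1 hy
    rw [(memA2 _).1 hz]
    exact (memA _).2 ⟨u, h1, h2, (hadd u)⟩
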